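/- arXiv:2605.29095 — 2 statements merged into one kernel-verified Lean document; each statement's English description precedes it below -/
import Mathlib

section
/- If X is a random variable uniformly distributed on the open unit disc in the complex plane, then E[(log|1 - X|)²] = (ζ(2) - 1)/2. -/
/-!
Write `w = r e^{iθ}`. For `r < 1`, `-log |1 - w| = ∑_{n ≥ 1} rⁿ cos(nθ) / n`; squaring gives a
double series which, against `r dr dθ` on `(0, 1) × (-π, π)`, is absolutely summable in `L¹`, so it
may be integrated termwise. Orthogonality of the cosines kills the off-diagonal terms and the
diagonal term `n` contributes `π / (2 n² (n + 1))`. Since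
`1 / (n² (n + 1)) = 1 / n² - (1 / n - 1 / (n + 1))`, the integral over the disc is
`(π / 2) (ζ(2) - 1)`; dividing by the area `π` gives the result.
-/

open Real Complex MeasureTheory

/-- The uniform probability measure on the open unit disc in `ℂ`. -/
noncomputable def unifDisc : Measure ℂ :=
  (volume (Metric.ball (0 : ℂ) 1))⁻¹ • volume.restrict (Metric.ball (0 : ℂ) 1)

open Filter Topology Set

theorem setIntegral_ball_zero_eq_integral_polar {E : Type*} [NormedAddCommGroup E]
    [NormedSpace ℝ E] (f : ℂ → E) (R : ℝ) :
    ∫ w in Metric.ball (0 : ℂ) R, f w =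
      ∫ p in Ioo 0 R ×ˢ Ioo (-π) π, p.1 • f (Complex.polarCoord.symm p) := by
  have hS : MeasurableSet (Ioo 0 R ×ˢ Ioo (-π) π) := measurableSet_Ioo.prod measurableSet_Ioo
  have hsub : Ioo 0 R ×ˢ Ioo (-π) π ⊆ polarCoord.target := by
    rw [polarCoord_target]
    exact prod_mono Ioo_subset_Ioi_self subset_rfl
  have hindicator : ∀ p ∈ polarCoord.target,
      p.1 • (Metric.ball 0 R).indicator f (Complex.polarCoord.symm p) =
        (Ioo 0 R ×ˢ Ioo (-π) π).indicator (fun q => q.1 • f (Complex.polarCoord.symm q)) p := by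
    rintro ⟨r, θ⟩ ⟨hr : 0 < r, hθ⟩
    have hmem : Complex.polarCoord.symm (r, θ) ∈ Metric.ball 0 R ↔
        (r, θ) ∈ Ioo 0 R ×ˢ Ioo (-π) π := by
      simp [abs_of_pos hr, hr, hθ]
    by_cases h : (r, θ) ∈ Ioo 0 R ×ˢ Ioo (-π) π
    · rw [indicator_of_mem h, indicator_of_mem (hmem.2 h)]
    · rw [indicator_of_notMem h, indicator_of_notMem (mt hmem.1 h), smul_zero]
  rw [← integral_indicator measurableSet_ball, ← Complex.integral_comp_polarCoord_symm,
    setIntegral_congr_fun polarCoord.open_target.measurableSet hindicator,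
    setIntegral_indicator hS, inter_eq_self_of_subset_right hsub]

theorem Antitone.hasSum_sub_succ {f : ℕ → ℝ} (hf : Antitone f)
    (h0 : Tendsto f atTop (𝓝 0)) : HasSum (fun n => f n - f (n + 1)) (f 0) := by
  rw [hasSum_iff_tendsto_nat_of_nonneg fun n => sub_nonneg.2 (hf n.le_succ)]
  simp_rw [Finset.sum_range_sub']
  simpa using tendsto_const_nhds.sub h0

theorem hasSum_one_div_succ_sq_mul_succ_succ :
    HasSum (fun n : ℕ => 1 / (((n : ℝ) + 1) ^ 2 * ((n : ℝ) + 2))) (π ^ 2 / 6 - 1) := by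
  have hζ : HasSum (fun n : ℕ => 1 / ((n : ℝ) + 1) ^ 2) (π ^ 2 / 6) := by
    simpa using (hasSum_nat_add_iff' 1).mpr hasSum_zeta_two
  have hanti : Antitone fun n : ℕ => 1 / ((n : ℝ) + 1) := fun m n hmn => by
    dsimp only
    gcongr
  have htel := hanti.hasSum_sub_succ tendsto_one_div_add_atTop_nhds_zero_nat
  refine (hζ.sub (by simpa using htel)).congr_fun fun n => ?_
  field_simp
  ring

theorem hasSum_ite_fst_eq_snd {α M : Type*} [DecidableEq α] [AddCommMonoid M] [TopologicalSpace M]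
    {c : α → M} {a : M} (h : HasSum c a) :
    HasSum (fun p : α × α => if p.1 = p.2 then c p.1 else 0) a := by
  have hdiag : Function.Injective fun x : α => (x, x) := fun x y h => congrArg Prod.fst h
  refine (hdiag.hasSum_iff fun p hp => if_neg fun h => hp ⟨p.1, Prod.ext rfl h⟩).mp ?_
  simpa [Function.comp_def] using h

theorem integral_cos_int_mul_eq_zero {k : ℤ} (hk : k ≠ 0) :
    ∫ x in -π..π, Real.cos (k * x) = 0 := by
  rw [intervalIntegral.integral_comp_mul_left (fun x => Real.cos x) (Int.cast_ne_zero.2 hk),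
    integral_cos]
  simp [Real.sin_int_mul_pi]

theorem integral_cos_nat_mul_mul_cos_nat_mul {n m : ℕ} (h : n + m ≠ 0) :
    ∫ x in -π..π, Real.cos (n * x) * Real.cos (m * x) = if n = m then π else 0 := by
  have hprod (x : ℝ) : Real.cos (n * x) * Real.cos (m * x) =
      (Real.cos (((n - m : ℤ) : ℝ) * x) + Real.cos (((n + m : ℤ) : ℝ) * x)) / 2 := by
    push_cast
    rw [sub_mul, add_mul, Real.cos_sub, Real.cos_add]
    ring
  have hint (k : ℤ) : IntervalIntegrable (fun x => Real.cos (k * x)) volume (-π) π :=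
    (by fun_prop : Continuous fun x => Real.cos (k * x)).intervalIntegrable _ _
  simp_rw [hprod, intervalIntegral.integral_div, intervalIntegral.integral_add (hint _) (hint _),
    integral_cos_int_mul_eq_zero (by exact_mod_cast h : (n + m : ℤ) ≠ 0), add_zero]
  split_ifs with hnm
  · subst hnm
    simp
  · rw [integral_cos_int_mul_eq_zero (sub_ne_zero.2 (by exact_mod_cast hnm)), zero_div]

theorem hasSum_re_pow_succ_div_neg_log {z : ℂ} (hz : ‖z‖ < 1) :
    HasSum (fun n : ℕ => (z ^ (n + 1)).re / (n + 1)) (-Real.log ‖1 - z‖) := by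
  have h := (hasSum_nat_add_iff' 1).mpr (Complex.hasSum_re (Complex.hasSum_taylorSeries_neg_log hz))
  simp only [Complex.div_natCast_re] at h
  simpa [Complex.log_re] using h

theorem re_polarCoord_symm_pow (p : ℝ × ℝ) (n : ℕ) :
    ((Complex.polarCoord.symm p) ^ n).re = p.1 ^ n * Real.cos (n * p.2) := by
  rw [Complex.polarCoord_symm_apply, mul_pow, ← ofReal_pow, ofReal_cos, ofReal_sin,
    cos_add_sin_mul_I_pow, re_ofReal_mul, ← ofReal_natCast, ← ofReal_mul, ← ofReal_cos,
    ← ofReal_sin, add_re, ofReal_re, re_ofReal_mul, I_re, mul_zero, add_zero]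

-- `r aₙ aₘ` with `aₙ = rⁿ⁺¹ cos((n + 1) θ) / (n + 1)`, written as a radial times an angular factor
noncomputable def polarTerm (p : ℕ × ℕ) (x : ℝ × ℝ) : ℝ :=
  x.1 ^ (p.1 + p.2 + 3) / (((p.1 : ℝ) + 1) * ((p.2 : ℝ) + 1)) *
    (Real.cos (((p.1 : ℝ) + 1) * x.2) * Real.cos (((p.2 : ℝ) + 1) * x.2))

theorem hasSum_polarTerm {x : ℝ × ℝ} (hx₀ : 0 ≤ x.1) (hx₁ : x.1 < 1) :
    HasSum (fun p => polarTerm p x) (x.1 * Real.log ‖1 - Complex.polarCoord.symm x‖ ^ 2) := by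
  set a : ℕ → ℝ := fun n => x.1 ^ (n + 1) * Real.cos (((n : ℝ) + 1) * x.2) / ((n : ℝ) + 1)
  have ha : HasSum a (-Real.log ‖1 - Complex.polarCoord.symm x‖) := by
    have hz : ‖Complex.polarCoord.symm x‖ < 1 := by
      rwa [norm_polarCoord_symm, abs_of_nonneg hx₀]
    refine (hasSum_re_pow_succ_div_neg_log hz).congr_fun fun n => ?_
    rw [re_polarCoord_symm_pow]
    push_cast
    rfl
  have ha_le (n : ℕ) : ‖a n‖ ≤ x.1 ^ (n + 1) := by
    rw [Real.norm_eq_abs, abs_div, abs_mul, abs_pow, abs_of_nonneg hx₀,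
      abs_of_pos (n.cast_add_one_pos : (0 : ℝ) < n + 1)]
    refine div_le_of_le_mul₀ n.cast_add_one_pos.le (by positivity) ?_
    exact mul_le_mul_of_nonneg_left ((abs_cos_le_one _).trans (by simp)) (by positivity)
  have ha_norm : Summable fun n => ‖a n‖ :=
    .of_nonneg_of_le (fun _ => norm_nonneg _) ha_le
      ((summable_nat_add_iff 1).mpr (summable_geometric_of_lt_one hx₀ hx₁))
  have hprod := (ha.mul ha (summable_mul_of_summable_norm ha_norm ha_norm)).mul_left x.1
  rw [neg_mul_neg, ← sq] at hprod
  refine hprod.congr_fun fun p => ?_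
  simp only [polarTerm, a]
  field_simp
  ring

theorem integral_Ioo_zero_one_pow (k : ℕ) : ∫ r in Ioo (0 : ℝ) 1, r ^ k = 1 / (k + 1) := by
  rw [← integral_Ioc_eq_integral_Ioo, ← intervalIntegral.integral_of_le zero_le_one, integral_pow]
  simp

theorem Continuous.integrableOn_Ioo_prod_Ioo {E : Type*} [NormedAddCommGroup E] {f : ℝ × ℝ → E}
    (hf : Continuous f) (a b c d : ℝ) : IntegrableOn f (Ioo a b ×ˢ Ioo c d) :=
  (hf.continuousOn.integrableOn_compact (isCompact_Icc.prod isCompact_Icc)).mono_set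
    (prod_mono Ioo_subset_Icc_self Ioo_subset_Icc_self)

theorem integrableOn_polarTerm (p : ℕ × ℕ) :
    IntegrableOn (polarTerm p) (Ioo (0 : ℝ) 1 ×ˢ Ioo (-π) π) :=
  Continuous.integrableOn_Ioo_prod_Ioo (by unfold polarTerm; fun_prop) _ _ _ _

theorem integral_polarTerm (p : ℕ × ℕ) :
    ∫ x in Ioo (0 : ℝ) 1 ×ˢ Ioo (-π) π, polarTerm p x =
      if p.1 = p.2 then π / 2 * (1 / (((p.1 : ℝ) + 1) ^ 2 * ((p.1 : ℝ) + 2))) else 0 := by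
  obtain ⟨n, m⟩ := p
  have hcos :
      ∫ θ in Ioo (-π) π, Real.cos (((n : ℝ) + 1) * θ) * Real.cos (((m : ℝ) + 1) * θ) =
        if n = m then π else 0 := by
    rw [← integral_Ioc_eq_integral_Ioo, ← intervalIntegral.integral_of_le (by linarith [pi_pos])]
    simpa using integral_cos_nat_mul_mul_cos_nat_mul (n := n + 1) (m := m + 1) (by omega)
  rw [Measure.volume_eq_prod]
  unfold polarTerm
  rw [setIntegral_prod_mul
    (fun r => r ^ (n + m + 3) / (((n : ℝ) + 1) * ((m : ℝ) + 1)))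
    (fun θ => Real.cos (((n : ℝ) + 1) * θ) * Real.cos (((m : ℝ) + 1) * θ)),
    integral_div, integral_Ioo_zero_one_pow, hcos]
  split_ifs with h
  · subst h
    push_cast
    field_simp
    ring
  · rw [mul_zero]

theorem integral_norm_polarTerm_le (p : ℕ × ℕ) :
    ∫ x in Ioo (0 : ℝ) 1 ×ˢ Ioo (-π) π, ‖polarTerm p x‖ ≤
      2 * π / (((p.1 : ℝ) + 1) * ((p.2 : ℝ) + 1) * ((p.1 : ℝ) + p.2 + 4)) := by
  obtain ⟨n, m⟩ := p
  set c : ℝ := ((n : ℝ) + 1) * ((m : ℝ) + 1)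
  have hc : 0 < c := by positivity
  have hbound : IntegrableOn (fun x : ℝ × ℝ => x.1 ^ (n + m + 3) / c * 1)
      (Ioo (0 : ℝ) 1 ×ˢ Ioo (-π) π) :=
    Continuous.integrableOn_Ioo_prod_Ioo (by fun_prop) _ _ _ _
  calc ∫ x in Ioo (0 : ℝ) 1 ×ˢ Ioo (-π) π, ‖polarTerm (n, m) x‖
      ≤ ∫ x in Ioo (0 : ℝ) 1 ×ˢ Ioo (-π) π, x.1 ^ (n + m + 3) / c * 1 := by
        refine setIntegral_mono_on (integrableOn_polarTerm _).norm hbound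
          (measurableSet_Ioo.prod measurableSet_Ioo) fun x hx => ?_
        have hx₀ : 0 ≤ x.1 := hx.1.1.le
        rw [polarTerm, norm_mul, Real.norm_of_nonneg (by positivity), norm_mul]
        gcongr
        exact mul_le_one₀ (abs_cos_le_one _) (norm_nonneg _) (abs_cos_le_one _)
    _ = 2 * π / (c * ((n : ℝ) + m + 4)) := by
        rw [Measure.volume_eq_prod, setIntegral_prod_mul (fun r => r ^ (n + m + 3) / c)
          (fun _ => (1 : ℝ)), integral_div, integral_Ioo_zero_one_pow, setIntegral_const,
          volume_real_Ioo_of_le (by linarith [pi_pos])]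
        push_cast
        field_simp
        ring

theorem summable_inv_mul_sqrt_nat_succ :
    Summable fun n : ℕ => (((n : ℝ) + 1) * √((n : ℝ) + 1))⁻¹ := by
  have h := summable_nat_rpow_inv.mpr (by norm_num : (1 : ℝ) < 1 + 1 / 2)
  refine ((summable_nat_add_iff 1).mpr h).congr fun n => ?_
  rw [rpow_add (by positivity), rpow_one, ← sqrt_eq_rpow]
  push_cast
  rfl

theorem summable_integral_norm_polarTerm :
    Summable fun p : ℕ × ℕ => ∫ x in Ioo (0 : ℝ) 1 ×ˢ Ioo (-π) π, ‖polarTerm p x‖ := by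
  set u : ℕ → ℝ := fun n => (((n : ℝ) + 1) * √((n : ℝ) + 1))⁻¹
  have hu : Summable fun p : ℕ × ℕ => 2 * π * (u p.1 * u p.2) := by
    have := summable_norm_iff.mpr summable_inv_mul_sqrt_nat_succ
    exact (summable_mul_of_summable_norm this this).mul_left _
  refine hu.of_nonneg_of_le (fun p => integral_nonneg fun _ => norm_nonneg _)
    fun p => (integral_norm_polarTerm_le p).trans ?_
  -- `√a √b ≤ (a + b) / 2`, so `(a √a) (b √b) ≤ a b (a + b + 2)` for `a = n + 1`, `b = m + 1`
  obtain ⟨n, m⟩ := p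
  set a : ℝ := (n : ℝ) + 1
  set b : ℝ := (m : ℝ) + 1
  have ha : 0 < a := by positivity
  have hb : 0 < b := by positivity
  have hab : a * √a * (b * √b) ≤ a * b * ((n : ℝ) + m + 4) := by
    have := sq_nonneg (√a - √b)
    rw [sub_sq, sq_sqrt ha.le, sq_sqrt hb.le] at this
    have : √a * √b ≤ (n : ℝ) + m + 4 := by nlinarith
    calc a * √a * (b * √b) = a * b * (√a * √b) := by ring
      _ ≤ a * b * ((n : ℝ) + m + 4) := by gcongr
  calc 2 * π / (a * b * ((n : ℝ) + m + 4)) ≤ 2 * π / (a * √a * (b * √b)) :=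
        div_le_div_of_nonneg_left (by positivity) (by positivity) hab
    _ = 2 * π * (u n * u m) := by simp only [u, a, b, div_eq_mul_inv, mul_inv]

theorem setIntegral_ball_log_norm_one_sub_sq :
    ∫ w in Metric.ball (0 : ℂ) 1, Real.log ‖1 - w‖ ^ 2 = π / 2 * (π ^ 2 / 6 - 1) := by
  have hS : MeasurableSet (Ioo (0 : ℝ) 1 ×ˢ Ioo (-π) π) :=
    measurableSet_Ioo.prod measurableSet_Ioo
  rw [setIntegral_ball_zero_eq_integral_polar]
  simp_rw [smul_eq_mul]
  rw [setIntegral_congr_fun hS fun x hx => (hasSum_polarTerm hx.1.1.le hx.1.2).tsum_eq.symm,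
    ← integral_tsum_of_summable_integral_norm integrableOn_polarTerm
      summable_integral_norm_polarTerm, tsum_congr integral_polarTerm]
  exact (hasSum_ite_fst_eq_snd (hasSum_one_div_succ_sq_mul_succ_succ.mul_left (π / 2))).tsum_eq

/-- If `X` is uniform on the unit disc, then `E[(log|1 - X|)²] = (ζ(2) - 1)/2`. -/
theorem expectation_sq_log_abs_one_sub_uniform :
    ∫ w, (Real.log (‖1 - w‖)) ^ 2 ∂unifDisc = (π ^ 2 / 6 - 1) / 2 := by
  rw [unifDisc, integral_smul_measure, setIntegral_ball_log_norm_one_sub_sq, Complex.volume_ball,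
    ENNReal.ofReal_one, one_pow, one_mul, ENNReal.toReal_inv, ENNReal.coe_toReal,
    NNReal.coe_real_pi, smul_eq_mul]
  field_simp
end

section
/- Let X be uniformly distributed on the open unit disc, r ∈ (0,1), and Y = r - Re(1/(r - X)). Then there exist absolute constants C₂ ≤ C₁ (independent of r and m) such that for all m ≥ 2, C₂ log m ≤ E[Y² · 1_{|Y| ≤ m}] ≤ C₁ log m. -/
open Real Complex MeasureTheory

/-!
For `t > 0` the set `{z | t < Re (1 / (c - z))}` is the disc of radius `1 / (2t)` whose
boundary passes through `c` from the left, and `{z | Re (1 / (c - z)) < -t}` is its mirror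
image on the right. So `P(|Y| > t) ≤ 2 / t²` for `t ≥ 2`, while for `0 ≤ r ≤ 1` and `t ≥ 1`
the first disc lies inside the unit disc and `P(Re (1 / (r - X)) > t) = 1 / (4t²)` exactly.
The layer-cake formula `E[Y² 1_{|Y| ≤ m}] = ∫₀ᵐ 2t P(t < |Y| ≤ m) dt` turns both bounds into
multiples of `∫ dt / t`, i.e. of `log m`.
-/

open Set Metric

theorem integral_sq_restrict_abs_le_eq_lintegral {α : Type*} [MeasurableSpace α] (μ : Measure α)
    {g : α → ℝ} (hg : Measurable g) (m : ℝ) :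
    ∫ x in {x | |g x| ≤ m}, g x ^ 2 ∂μ =
      (∫⁻ t in Ioc 0 m,
        μ.restrict {x | |g x| ≤ m} {x | t < |g x|} * ENNReal.ofReal (2 * t)).toReal := by
  set ν := μ.restrict {x | |g x| ≤ m}
  have hsq : ∀ x, ∫ t in (0 : ℝ)..|g x|, 2 * t = g x ^ 2 := fun x => by
    rw [intervalIntegral.integral_const_mul, integral_id, sq_abs]; ring
  have hlayer := lintegral_comp_eq_lintegral_meas_lt_mul (g := fun t => 2 * t) ν
    (ae_of_all _ fun x => abs_nonneg (g x)) hg.abs.aemeasurable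
    (fun t _ => (continuous_const.mul continuous_id).intervalIntegrable 0 t)
    ((ae_restrict_mem measurableSet_Ioi).mono fun t (ht : 0 < t) => (mul_pos two_pos ht).le)
  simp only [hsq] at hlayer
  have htail : ∫⁻ t in Ioi 0 \ Iic m, ν {x | t < |g x|} * ENNReal.ofReal (2 * t) = 0 := by
    refine setLIntegral_eq_zero (measurableSet_Ioi.diff measurableSet_Iic) fun t ht => ?_
    have hempty : {x | t < |g x|} ∩ {x | |g x| ≤ m} = ∅ :=
      eq_empty_of_forall_notMem fun x hx => ht.2 (mem_Iic.2 (hx.1.le.trans hx.2))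
    simp [ν, Measure.restrict_apply (measurableSet_lt measurable_const hg.abs), hempty]
  rw [integral_eq_lintegral_of_nonneg_ae (ae_of_all _ fun x => sq_nonneg (g x))
    (hg.pow_const 2).aestronglyMeasurable, hlayer,
    ← lintegral_inter_add_sdiff _ _ measurableSet_Iic, htail, add_zero, Ioi_inter_Iic]

theorem lintegral_Ioc_ofReal_div {a b c : ℝ} (ha : 0 < a) (hab : a ≤ b) (hc : 0 ≤ c) :
    ∫⁻ t in Ioc a b, ENNReal.ofReal (c / t) = ENNReal.ofReal (c * Real.log (b / a)) := by
  rw [← ofReal_integral_eq_lintegral_ofReal, ← intervalIntegral.integral_of_le hab]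
  · simp only [div_eq_mul_inv c, intervalIntegral.integral_const_mul,
      integral_inv_of_pos ha (ha.trans_le hab)]
  · exact (continuousOn_const.div continuousOn_id fun t ht =>
      (ha.trans_le ht.1).ne').integrableOn_Icc.mono_set Ioc_subset_Icc_self
  · exact (ae_restrict_mem measurableSet_Ioc).mono fun t ht =>
      div_nonneg hc (ha.trans ht.1).le

theorem Complex.lt_re_inv_iff_mem_ball {t : ℝ} (ht : 0 < t) (w : ℂ) :
    t < (w⁻¹).re ↔ w ∈ ball (((2 * t)⁻¹ : ℝ) : ℂ) (2 * t)⁻¹ := by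
  have hρ : (0 : ℝ) < (2 * t)⁻¹ := by positivity
  rw [mem_ball, Complex.dist_eq, ← sq_lt_sq₀ (norm_nonneg _) hρ.le, Complex.sq_norm,
    normSq_apply, inv_re]
  simp only [sub_re, sub_im, ofReal_re, ofReal_im, sub_zero]
  rcases eq_or_ne w 0 with rfl | hw
  · simp [ht.not_gt, sq]
  rw [lt_div_iff₀ (normSq_pos.2 hw), normSq_apply]
  constructor <;> intro h <;> field_simp at h ⊢ <;> nlinarith

theorem setOf_lt_re_inv_sub {t : ℝ} (ht : 0 < t) (c : ℂ) :
    {z : ℂ | t < ((c - z)⁻¹).re} = ball (c - ((2 * t)⁻¹ : ℝ)) (2 * t)⁻¹ := by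
  ext z
  rw [mem_ofPred_eq, Complex.lt_re_inv_iff_mem_ball ht, mem_ball, mem_ball, Complex.dist_eq,
    Complex.dist_eq, ← norm_neg]
  ring_nf

theorem setOf_re_inv_sub_lt_neg {t : ℝ} (ht : 0 < t) (c : ℂ) :
    {z : ℂ | ((c - z)⁻¹).re < -t} = ball (c + ((2 * t)⁻¹ : ℝ)) (2 * t)⁻¹ := by
  ext z
  rw [mem_ofPred_eq, ← neg_sub z c, inv_neg, neg_re, neg_lt_neg_iff,
    Complex.lt_re_inv_iff_mem_ball ht, mem_ball, mem_ball, Complex.dist_eq, Complex.dist_eq]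
  ring_nf

theorem unifDisc_apply {S : Set ℂ} (hS : MeasurableSet S) :
    unifDisc S = (NNReal.pi : ENNReal)⁻¹ * volume (S ∩ ball 0 1) := by
  simp [unifDisc, Measure.restrict_apply hS]

instance : IsProbabilityMeasure unifDisc :=
  ⟨by rw [unifDisc_apply .univ, univ_inter, Complex.volume_ball]
      simp [ENNReal.inv_mul_cancel, NNReal.pi_ne_zero]⟩

theorem inv_pi_mul_volume_ball (c : ℂ) {d : ℝ} (hd : 0 ≤ d) :
    (NNReal.pi : ENNReal)⁻¹ * volume (ball c d) = ENNReal.ofReal (d ^ 2) := by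
  rw [Complex.volume_ball, ENNReal.ofReal_pow hd, mul_comm, mul_assoc,
    ENNReal.mul_inv_cancel (by simp [NNReal.pi_ne_zero]) ENNReal.coe_ne_top, mul_one]

theorem unifDisc_ball_le (c : ℂ) {d : ℝ} (hd : 0 ≤ d) :
    unifDisc (ball c d) ≤ ENNReal.ofReal (d ^ 2) := by
  rw [unifDisc_apply measurableSet_ball, ← inv_pi_mul_volume_ball c hd]
  gcongr
  exact inter_subset_left

theorem unifDisc_ball_of_subset {c : ℂ} {d : ℝ} (hd : 0 ≤ d) (h : ball c d ⊆ ball 0 1) :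
    unifDisc (ball c d) = ENNReal.ofReal (d ^ 2) := by
  rw [unifDisc_apply measurableSet_ball, inter_eq_left.2 h, inv_pi_mul_volume_ball c hd]

theorem unifDisc_lt_re_inv_sub_le (c : ℂ) {t : ℝ} (ht : 0 < t) :
    unifDisc {z : ℂ | t < ((c - z)⁻¹).re} ≤ ENNReal.ofReal ((4 * t ^ 2)⁻¹) := by
  rw [setOf_lt_re_inv_sub ht, show (4 * t ^ 2)⁻¹ = (2 * t)⁻¹ ^ 2 by ring]
  exact unifDisc_ball_le _ (by positivity)

theorem unifDisc_re_inv_sub_lt_neg_le (c : ℂ) {t : ℝ} (ht : 0 < t) :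
    unifDisc {z : ℂ | ((c - z)⁻¹).re < -t} ≤ ENNReal.ofReal ((4 * t ^ 2)⁻¹) := by
  rw [setOf_re_inv_sub_lt_neg ht, show (4 * t ^ 2)⁻¹ = (2 * t)⁻¹ ^ 2 by ring]
  exact unifDisc_ball_le _ (by positivity)

theorem unifDisc_lt_re_inv_sub {r t : ℝ} (hr₀ : 0 ≤ r) (hr₁ : r ≤ 1) (ht : 1 ≤ t) :
    unifDisc {z : ℂ | t < ((r - z)⁻¹).re} = ENNReal.ofReal ((4 * t ^ 2)⁻¹) := by
  have hρ : (2 * t)⁻¹ ≤ 2⁻¹ := inv_anti₀ two_pos (by linarith)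
  rw [setOf_lt_re_inv_sub (by positivity), show (4 * t ^ 2)⁻¹ = (2 * t)⁻¹ ^ 2 by ring]
  refine unifDisc_ball_of_subset (by positivity) (ball_subset_ball' ?_)
  rw [dist_zero_right, ← ofReal_sub, norm_real, Real.norm_eq_abs, ← le_sub_iff_add_le',
    abs_sub_le_iff]
  constructor <;> linarith

theorem unifDisc_lt_abs_sub_re_inv_sub_le {a t : ℝ} (c : ℂ) (ha : |a| ≤ 1) (ht : 2 ≤ t) :
    unifDisc {z : ℂ | t < |a - ((c - z)⁻¹).re|} ≤ ENNReal.ofReal (2 / t ^ 2) := by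
  have hs : 0 < t - 1 := by linarith
  calc unifDisc {z : ℂ | t < |a - ((c - z)⁻¹).re|}
      ≤ unifDisc ({z : ℂ | t - 1 < ((c - z)⁻¹).re} ∪ {z : ℂ | ((c - z)⁻¹).re < -(t - 1)}) := by
        refine measure_mono fun z (hz : t < _) => ?_
        have : t - 1 < |((c - z)⁻¹).re| := by linarith [abs_sub a ((c - z)⁻¹).re]
        rcases lt_abs.1 this with h | h
        · exact .inl h
        · exact .inr (by linarith : ((c - z)⁻¹).re < -(t - 1))
    _ ≤ ENNReal.ofReal ((4 * (t - 1) ^ 2)⁻¹) + ENNReal.ofReal ((4 * (t - 1) ^ 2)⁻¹) :=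
        (measure_union_le _ _).trans
          (add_le_add (unifDisc_lt_re_inv_sub_le c hs) (unifDisc_re_inv_sub_lt_neg_le c hs))
    _ ≤ ENNReal.ofReal (2 / t ^ 2) := by
        rw [← ENNReal.ofReal_add (by positivity) (by positivity)]
        refine ENNReal.ofReal_le_ofReal ?_
        rw [← two_mul, ← div_eq_mul_inv, div_le_div_iff₀ (by positivity) (by positivity)]
        nlinarith

theorem le_unifDisc_restrict_lt_abs_sub_re_inv_sub {r t m : ℝ} (hr₀ : 0 ≤ r) (hr₁ : r ≤ 1)
    (ht : 0 < t) (htm : t + 1 ≤ m) :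
    ENNReal.ofReal ((4 * (t + 1) ^ 2)⁻¹ - (4 * m ^ 2)⁻¹) ≤
      unifDisc.restrict {z : ℂ | |r - ((r - z)⁻¹).re| ≤ m}
        {z : ℂ | t < |r - ((r - z)⁻¹).re|} := by
  have hY : Measurable fun z : ℂ => |r - ((r - z)⁻¹).re| := by fun_prop
  rw [Measure.restrict_apply (measurableSet_lt measurable_const hY),
    ENNReal.ofReal_sub _ (by positivity), ← unifDisc_lt_re_inv_sub hr₀ hr₁ (by linarith)]
  calc unifDisc {z : ℂ | t + 1 < ((r - z)⁻¹).re} - ENNReal.ofReal ((4 * m ^ 2)⁻¹)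
      ≤ unifDisc {z : ℂ | t + 1 < ((r - z)⁻¹).re} - unifDisc {z : ℂ | m < ((r - z)⁻¹).re} :=
        tsub_le_tsub_left (unifDisc_lt_re_inv_sub_le _ (by linarith)) _
    _ ≤ unifDisc ({z : ℂ | t + 1 < ((r - z)⁻¹).re} \ {z : ℂ | m < ((r - z)⁻¹).re}) :=
        le_measure_sdiff
    _ ≤ _ := by
        refine measure_mono fun z ⟨(h₁ : t + 1 < _), (h₂ : ¬ m < _)⟩ => ?_
        have habs : |r - ((r - z)⁻¹).re| = ((r - z)⁻¹).re - r := by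
          rw [abs_sub_comm]; exact abs_of_pos (by linarith)
        exact ⟨show t < _ by rw [habs]; linarith, show _ ≤ m by rw [habs]; linarith⟩

theorem lintegral_Ioc_restrict_lt_abs_sub_re_inv_sub_le {a m : ℝ} (c : ℂ) (ha : |a| ≤ 1)
    (hm : 2 ≤ m) :
    ∫⁻ t in Ioc 0 m, unifDisc.restrict {z : ℂ | |a - ((c - z)⁻¹).re| ≤ m}
        {z : ℂ | t < |a - ((c - z)⁻¹).re|} * ENNReal.ofReal (2 * t) ≤
      ENNReal.ofReal (8 + 4 * Real.log (m / 2)) := by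
  set ν := unifDisc.restrict {z : ℂ | |a - ((c - z)⁻¹).re| ≤ m}
  have hsmall :
      ∫⁻ t in Ioc 0 2, ν {z : ℂ | t < |a - ((c - z)⁻¹).re|} * ENNReal.ofReal (2 * t) ≤
        ENNReal.ofReal 8 := by
    calc _ ≤ ∫⁻ t in Ioc (0 : ℝ) 2, 1 * ENNReal.ofReal 4 :=
          setLIntegral_mono' measurableSet_Ioc fun t ht =>
            mul_le_mul' ((Measure.restrict_apply_le _ _).trans prob_le_one)
              (ENNReal.ofReal_le_ofReal (by linarith [ht.2]))
      _ = ENNReal.ofReal 8 := by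
          rw [setLIntegral_const, Real.volume_Ioc, one_mul, ← ENNReal.ofReal_mul (by norm_num)]
          norm_num
  have hlarge :
      ∫⁻ t in Ioc 2 m, ν {z : ℂ | t < |a - ((c - z)⁻¹).re|} * ENNReal.ofReal (2 * t) ≤
        ENNReal.ofReal (4 * Real.log (m / 2)) := by
    calc _ ≤ ∫⁻ t in Ioc 2 m, ENNReal.ofReal (4 / t) :=
          setLIntegral_mono' measurableSet_Ioc fun t ht => by
            have ht₀ : 0 < t := by linarith [ht.1]
            calc ν {z : ℂ | t < |a - ((c - z)⁻¹).re|} * ENNReal.ofReal (2 * t)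
                ≤ ENNReal.ofReal (2 / t ^ 2) * ENNReal.ofReal (2 * t) :=
                  mul_le_mul_left ((Measure.restrict_apply_le _ _).trans
                    (unifDisc_lt_abs_sub_re_inv_sub_le c ha ht.1.le)) _
              _ = ENNReal.ofReal (4 / t) := by
                  rw [← ENNReal.ofReal_mul (by positivity)]
                  congr 1
                  field_simp
                  ring
      _ = ENNReal.ofReal (4 * Real.log (m / 2)) :=
          lintegral_Ioc_ofReal_div two_pos hm (by norm_num)
  have hlog : 0 ≤ Real.log (m / 2) := Real.log_nonneg (by linarith)
  rw [← Ioc_union_Ioc_eq_Ioc zero_le_two hm, ENNReal.ofReal_add (by norm_num) (by positivity)]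
  exact (lintegral_union_le _ _ _).trans (add_le_add hsmall hlarge)

theorem le_lintegral_Ioc_restrict_lt_abs_sub_re_inv_sub {r m : ℝ} (hr₀ : 0 ≤ r) (hr₁ : r ≤ 1)
    (hm : 2 ≤ m) :
    ENNReal.ofReal (7 / 800 * Real.log m) ≤
      ∫⁻ t in Ioc 0 m, unifDisc.restrict {z : ℂ | |r - ((r - z)⁻¹).re| ≤ m}
        {z : ℂ | t < |r - ((r - z)⁻¹).re|} * ENNReal.ofReal (2 * t) := by
  calc ENNReal.ofReal (7 / 800 * Real.log m)
      = ∫⁻ t in Ioc (1 / 4) (m / 4), ENNReal.ofReal (7 / 800 / t) := by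
        rw [lintegral_Ioc_ofReal_div (by norm_num) (by linarith) (by norm_num)]
        congr 3
        ring
    -- On `[1/4, m/4]` we have `4 (t + 1) ≤ 3m` and `t + 1 ≤ 5t`.
    _ ≤ _ := setLIntegral_mono' measurableSet_Ioc fun t ⟨ht₁, ht₂⟩ => by
        have ht₀ : 0 < t := by linarith
        refine le_trans ?_ (mul_le_mul_left
          (le_unifDisc_restrict_lt_abs_sub_re_inv_sub hr₀ hr₁ ht₀ (by linarith)) _)
        rw [← ENNReal.ofReal_mul' (by positivity)]
        refine ENNReal.ofReal_le_ofReal ?_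
        have hm_inv : (4 * m ^ 2)⁻¹ ≤ 9 / (64 * (t + 1) ^ 2) := by
          rw [show 9 / (64 * (t + 1) ^ 2) = (4 * (4 * (t + 1) / 3) ^ 2)⁻¹ by field_simp; ring]
          exact inv_anti₀ (by positivity) (by nlinarith)
        have ht' : 7 / (1600 * t ^ 2) ≤ 7 / (64 * (t + 1) ^ 2) :=
          div_le_div_of_nonneg_left (by norm_num) (by positivity) (by nlinarith)
        calc 7 / 800 / t = 7 / (1600 * t ^ 2) * (2 * t) := by field_simp; ring
          _ ≤ ((4 * (t + 1) ^ 2)⁻¹ - (4 * m ^ 2)⁻¹) * (2 * t) := by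
              gcongr
              calc 7 / (1600 * t ^ 2) ≤ 7 / (64 * (t + 1) ^ 2) := ht'
                _ = (4 * (t + 1) ^ 2)⁻¹ - 9 / (64 * (t + 1) ^ 2) := by field_simp; ring
                _ ≤ _ := by linarith
    _ ≤ _ := lintegral_mono_set (Ioc_subset_Ioc (by norm_num) (by linarith))

/-- For `X` uniform on the unit disc and `Y = r - Re(1/(r - X))` with `r ∈ (0,1)`, there are
absolute constants `0 < C₂ ≤ C₁` such that for all `m ≥ 2`,
`C₂ log m ≤ E[Y² 1_{|Y| ≤ m}] ≤ C₁ log m`. -/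
theorem truncated_second_moment_of_Y :
    ∃ C₁ C₂ : ℝ, 0 < C₂ ∧ C₂ ≤ C₁ ∧
      ∀ r : ℝ, 0 < r → r < 1 → ∀ m : ℝ, 2 ≤ m →
        C₂ * Real.log m ≤
          (∫ z in {z : ℂ | |r - (((r : ℂ) - z)⁻¹).re| ≤ m},
              (r - (((r : ℂ) - z)⁻¹).re) ^ 2 ∂unifDisc) ∧
        (∫ z in {z : ℂ | |r - (((r : ℂ) - z)⁻¹).re| ≤ m},
              (r - (((r : ℂ) - z)⁻¹).re) ^ 2 ∂unifDisc) ≤ C₁ * Real.log m := by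
  refine ⟨20, 7 / 800, by norm_num, by norm_num, fun r hr₀ hr₁ m hm => ?_⟩
  rw [integral_sq_restrict_abs_le_eq_lintegral unifDisc
    (by fun_prop : Measurable fun z : ℂ => r - ((r - z)⁻¹).re) m]
  have hupper := lintegral_Ioc_restrict_lt_abs_sub_re_inv_sub_le (r : ℂ)
    (abs_le.2 ⟨by linarith, hr₁.le⟩) hm
  have hlower := le_lintegral_Ioc_restrict_lt_abs_sub_re_inv_sub hr₀.le hr₁.le hm
  have hlog₂ : 1 / 2 < Real.log 2 := by linarith [Real.log_two_gt_d9]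
  have hlog : Real.log 2 ≤ Real.log m := Real.log_le_log two_pos hm
  have hlog_div : Real.log (m / 2) = Real.log m - Real.log 2 :=
    Real.log_div (by linarith) two_ne_zero
  constructor
  · exact (ENNReal.ofReal_le_iff_le_toReal
      (ne_top_of_le_ne_top ENNReal.ofReal_ne_top hupper)).1 hlower
  · refine (ENNReal.toReal_le_of_le_ofReal ?_ hupper).trans ?_ <;> rw [hlog_div] <;> linarith
end
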